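/- arXiv:2502.02823 — 3 statements merged into one kernel-verified Lean document; each statement's English description precedes it below -/
import Mathlib

section
/- Let 0 ≤ β < 1 and let f = h + conj(g) ∈ G̃⁰_H(β). Then for every z ∈ 𝔻 with |z| = r, β·r + (1−β)·r·(1−r)/(1+r) ≤ |f(z)| ≤ β·r + (1−β)·r·(1+r)/(1−r). -/
/-!
For every unimodular `ε`, the analytic function `F = h + ε g` satisfies `F 0 = 0`, `F' 0 = 1` and
`β < re (F w / w)` on the punctured disk. Schwarz's lemma, applied to the Möbius image of `F w / w`
in the unit disk, gives `‖F z / z - 1‖ ≤ r ‖F z / z + 1 - 2β‖` with `r = ‖z‖`, so `F z / z` lies in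
a disk whose points have real part at least `(1 - r (1 - 2β)) / (1 + r)` and modulus at most
`(1 + r (1 - 2β)) / (1 - r)`. Choosing `ε` so that `ε g z / z = -‖g z / z‖`, resp. so that
`ε g z / z` points in the direction of `h z / z`, turns these into bounds for `‖h z‖ - ‖g z‖` and
`‖h z‖ + ‖g z‖`, which bound `‖f z‖` from below and above.
-/

open Metric Complex

section PowerSeries

variable {a : ℕ → ℂ} {f : ℂ → ℂ}

theorem hasFPowerSeriesOnBall_ofScalars_of_hasSum
    (hf : ∀ z ∈ ball (0 : ℂ) 1, HasSum (fun n => a n * z ^ n) (f z)) :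
    HasFPowerSeriesOnBall f (.ofScalars ℂ a) 0 1 where
  r_le := by
    refine ENNReal.le_of_forall_nnreal_lt fun r hr => ?_
    have hr1 : (r : ℝ) < 1 := by exact_mod_cast hr
    have hsum := hf r (by simpa [abs_of_nonneg r.coe_nonneg] using hr1)
    refine FormalMultilinearSeries.le_radius_of_tendsto _ (l := 0) ?_
    simpa [FormalMultilinearSeries.ofScalars_norm, abs_of_nonneg r.coe_nonneg]
      using hsum.summable.tendsto_atTop_zero.norm
  r_pos := one_pos
  hasSum {y} hy := by
    rw [← ENNReal.ofReal_one, eball_ofReal] at hy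
    simpa [FormalMultilinearSeries.ofScalars_apply_eq, mul_comm] using hf y hy

theorem apply_zero_of_hasSum (hf : ∀ z ∈ ball (0 : ℂ) 1, HasSum (fun n => a n * z ^ n) (f z)) :
    f 0 = a 0 := by
  simpa using ((hasFPowerSeriesOnBall_ofScalars_of_hasSum hf).coeff_zero fun _ => 0).symm

theorem differentiableOn_of_hasSum
    (hf : ∀ z ∈ ball (0 : ℂ) 1, HasSum (fun n => a n * z ^ n) (f z)) :
    DifferentiableOn ℂ f (ball 0 1) := by
  simpa [← ENNReal.ofReal_one, eball_ofReal]
    using (hasFPowerSeriesOnBall_ofScalars_of_hasSum hf).differentiableOn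

theorem deriv_zero_of_hasSum (hf : ∀ z ∈ ball (0 : ℂ) 1, HasSum (fun n => a n * z ^ n) (f z)) :
    deriv f 0 = a 1 := by
  simp [(hasFPowerSeriesOnBall_ofScalars_of_hasSum hf).hasFPowerSeriesAt.deriv]

end PowerSeries

section Subordination

theorem norm_sub_one_lt_norm_add_of_lt_re {w : ℂ} {β : ℝ} (hβ : β < 1) (hw : β < w.re) :
    ‖w - 1‖ < ‖w + ↑(1 - 2 * β)‖ := by
  rw [← sq_lt_sq₀ (norm_nonneg _) (norm_nonneg _), Complex.sq_norm, Complex.sq_norm, normSq_apply,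
    normSq_apply]
  simp only [sub_re, add_re, sub_im, add_im, one_re, one_im, ofReal_re, ofReal_im]
  nlinarith [mul_pos (sub_pos.2 hw) (sub_pos.2 hβ)]

theorem norm_sub_one_le_of_lt_re {p : ℂ → ℂ} {β : ℝ} (hp : DifferentiableOn ℂ p (ball 0 1))
    (hp0 : p 0 = 1) (hre : ∀ w ∈ ball (0 : ℂ) 1, β < (p w).re) {z : ℂ}
    (hz : z ∈ ball (0 : ℂ) 1) :
    ‖p z - 1‖ ≤ ‖z‖ * ‖p z + ↑(1 - 2 * β)‖ := by
  have hβ : β < 1 := by simpa [hp0] using hre 0 (mem_ball_self one_pos)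
  have hlt (w : ℂ) (hw : w ∈ ball (0 : ℂ) 1) : ‖p w - 1‖ < ‖p w + ↑(1 - 2 * β)‖ :=
    norm_sub_one_lt_norm_add_of_lt_re hβ (hre w hw)
  have hpos (w : ℂ) (hw : w ∈ ball (0 : ℂ) 1) : 0 < ‖p w + ↑(1 - 2 * β)‖ :=
    (norm_nonneg _).trans_lt (hlt w hw)
  have hmaps : Set.MapsTo (fun w => (p w - 1) / (p w + ↑(1 - 2 * β))) (ball 0 1)
      (closedBall 0 1) := fun w hw => by
    rw [mem_closedBall_zero_iff, norm_div, div_le_one (hpos w hw)]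
    exact (hlt w hw).le
  have hdiff : DifferentiableOn ℂ (fun w => (p w - 1) / (p w + ↑(1 - 2 * β))) (ball 0 1) :=
    (hp.sub_const 1).div (hp.add_const _) fun w hw => norm_pos_iff.mp (hpos w hw)
  have hschwarz := norm_le_norm_of_mapsTo_ball hdiff hmaps (by simp [hp0])
    (mem_ball_zero_iff.mp hz)
  rwa [norm_div, div_le_iff₀ (hpos z hz)] at hschwarz

theorem norm_div_sub_one_le_of_lt_re_div {c : ℕ → ℂ} {F : ℂ → ℂ} {β : ℝ} (hβ : β < 1)
    (hc0 : c 0 = 0) (hc1 : c 1 = 1)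
    (hF : ∀ z ∈ ball (0 : ℂ) 1, HasSum (fun n => c n * z ^ n) (F z))
    (hre : ∀ w ∈ ball (0 : ℂ) 1, w ≠ 0 → β < (F w / w).re) {z : ℂ}
    (hz : z ∈ ball (0 : ℂ) 1) (hz0 : z ≠ 0) :
    ‖F z / z - 1‖ ≤ ‖z‖ * ‖F z / z + ↑(1 - 2 * β)‖ := by
  have hF0 : F 0 = 0 := (apply_zero_of_hasSum hF).trans hc0
  have hslope (w : ℂ) (hw : w ≠ 0) : dslope F 0 w = F w / w := by
    rw [dslope_of_ne _ hw, slope_def_field, hF0, sub_zero, sub_zero]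
  have hdiff : DifferentiableOn ℂ (dslope F 0) (ball 0 1) :=
    (differentiableOn_dslope (ball_mem_nhds 0 one_pos)).mpr (differentiableOn_of_hasSum hF)
  have hslope0 : dslope F 0 0 = 1 := by rw [dslope_same, deriv_zero_of_hasSum hF, hc1]
  have hslope_re (w : ℂ) (hw : w ∈ ball (0 : ℂ) 1) : β < (dslope F 0 w).re := by
    obtain rfl | hw0 := eq_or_ne w 0
    · rw [hslope0]; simpa using hβ
    · exact hslope w hw0 ▸ hre w hw hw0
  simpa only [hslope z hz0] using norm_sub_one_le_of_lt_re hdiff hslope0 hslope_re hz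

end Subordination

section Disk

variable {w : ℂ} {r c : ℝ}

/-- For `r < 1` this is the disk with center `(1 + r²c) / (1 - r²)` and radius
`r (1 + c) / (1 - r²)`. -/
theorem norm_mul_sub_le_of_norm_sub_one_le (hr0 : 0 ≤ r) (hr1 : r ≤ 1) (hc : -1 ≤ c)
    (hw : ‖w - 1‖ ≤ r * ‖w + c‖) :
    ‖((1 - r ^ 2 : ℝ) : ℂ) * w - ((1 + r ^ 2 * c : ℝ) : ℂ)‖ ≤ r * (1 + c) := by
  have hsq := pow_le_pow_left₀ (norm_nonneg _) hw 2
  rw [← sq_le_sq₀ (norm_nonneg _) (mul_nonneg hr0 (by linarith))]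
  simp only [mul_pow, Complex.sq_norm, normSq_apply, sub_re, add_re, sub_im, add_im, mul_re,
    mul_im, one_re, one_im, ofReal_re, ofReal_im] at hsq ⊢
  nlinarith [mul_le_mul_of_nonneg_left hsq (by nlinarith : (0 : ℝ) ≤ 1 - r ^ 2)]

theorem one_sub_mul_le_mul_re_of_norm_sub_one_le (hr0 : 0 ≤ r) (hr1 : r < 1) (hc : -1 ≤ c)
    (hw : ‖w - 1‖ ≤ r * ‖w + c‖) : 1 - r * c ≤ (1 + r) * w.re := by
  have hdisk := neg_le_of_abs_le <| (abs_re_le_norm _).trans <|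
    norm_mul_sub_le_of_norm_sub_one_le hr0 hr1.le hc hw
  simp only [sub_re, mul_re, ofReal_re, ofReal_im, zero_mul, sub_zero] at hdisk
  nlinarith

theorem mul_norm_le_of_norm_sub_one_le (hr0 : 0 ≤ r) (hr1 : r < 1) (hc : -1 ≤ c)
    (hw : ‖w - 1‖ ≤ r * ‖w + c‖) : (1 - r) * ‖w‖ ≤ 1 + r * c := by
  have hdisk := (norm_sub_norm_le _ _).trans <|
    norm_mul_sub_le_of_norm_sub_one_le hr0 hr1.le hc hw
  rw [norm_mul, norm_real, Real.norm_of_nonneg (by nlinarith), norm_real,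
    Real.norm_of_nonneg (by nlinarith)] at hdisk
  nlinarith

end Disk

section Rotation

theorem exists_norm_eq_one_mul_eq (q : ℂ) (θ : ℝ) :
    ∃ ε : ℂ, ‖ε‖ = 1 ∧ ε * q = ‖q‖ * exp (θ * I) := by
  refine ⟨exp (↑(θ - arg q) * I), norm_exp_ofReal_mul_I _, ?_⟩
  calc exp (↑(θ - arg q) * I) * q = exp (↑(θ - arg q) * I) * (‖q‖ * exp (arg q * I)) := by
        rw [norm_mul_exp_arg_mul_I]
    _ = ‖q‖ * exp (θ * I) := by
        rw [mul_left_comm, ← exp_add]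
        push_cast
        ring_nf

variable {p q : ℂ} {r c : ℝ}

theorem one_sub_mul_le_mul_re_sub_norm (hr0 : 0 ≤ r) (hr1 : r < 1) (hc : -1 ≤ c)
    (hpq : ∀ ε : ℂ, ‖ε‖ = 1 → ‖p + ε * q - 1‖ ≤ r * ‖p + ε * q + c‖) :
    1 - r * c ≤ (1 + r) * (p.re - ‖q‖) := by
  obtain ⟨ε, hε, hεq⟩ := exists_norm_eq_one_mul_eq q Real.pi
  have := one_sub_mul_le_mul_re_of_norm_sub_one_le hr0 hr1 hc (hpq ε hε)
  rwa [hεq, exp_pi_mul_I, add_re, mul_neg_one, neg_re, ofReal_re, ← sub_eq_add_neg] at this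

theorem mul_norm_add_norm_le (hr0 : 0 ≤ r) (hr1 : r < 1) (hc : -1 ≤ c)
    (hpq : ∀ ε : ℂ, ‖ε‖ = 1 → ‖p + ε * q - 1‖ ≤ r * ‖p + ε * q + c‖) :
    (1 - r) * (‖p‖ + ‖q‖) ≤ 1 + r * c := by
  obtain ⟨ε, hε, hεq⟩ := exists_norm_eq_one_mul_eq q (arg p)
  have hrot : p + ε * q = ↑(‖p‖ + ‖q‖) * exp (arg p * I) := by
    rw [hεq, ofReal_add, add_mul, norm_mul_exp_arg_mul_I]
  have := mul_norm_le_of_norm_sub_one_le hr0 hr1 hc (hpq ε hε)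
  rwa [hrot, norm_mul, norm_exp_ofReal_mul_I, mul_one, norm_real,
    Real.norm_of_nonneg (by positivity)] at this

end Rotation

section Growth

variable {u v z : ℂ} {β : ℝ}

theorem le_norm_add_conj_of_forall_norm_sub_one_le (hβ : β < 1) (hz : ‖z‖ < 1) (hz0 : z ≠ 0)
    (hrot : ∀ ε : ℂ, ‖ε‖ = 1 →
      ‖u / z + ε * (v / z) - 1‖ ≤ ‖z‖ * ‖u / z + ε * (v / z) + ↑(1 - 2 * β)‖) :
    β * ‖z‖ + (1 - β) * ‖z‖ * (1 - ‖z‖) / (1 + ‖z‖) ≤ ‖u + starRingEnd ℂ v‖ := by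
  have hlow := one_sub_mul_le_mul_re_sub_norm (norm_nonneg z) hz (by linarith) hrot
  have hnorm (w : ℂ) : ‖w‖ = ‖z‖ * ‖w / z‖ := by
    rw [norm_div, mul_div_cancel₀ _ (norm_ne_zero_iff.mpr hz0)]
  calc β * ‖z‖ + (1 - β) * ‖z‖ * (1 - ‖z‖) / (1 + ‖z‖)
      = ‖z‖ * ((1 - ‖z‖ * (1 - 2 * β)) / (1 + ‖z‖)) := by field_simp; ring
    _ ≤ ‖z‖ * ((u / z).re - ‖v / z‖) := by gcongr; rwa [div_le_iff₀' (by positivity)]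
    _ ≤ ‖z‖ * (‖u / z‖ - ‖v / z‖) := by gcongr; exact re_le_norm _
    _ = ‖u‖ - ‖-starRingEnd ℂ v‖ := by rw [norm_neg, norm_conj, hnorm u, hnorm v]; ring
    _ ≤ ‖u + starRingEnd ℂ v‖ := by
      simpa only [sub_neg_eq_add] using norm_sub_norm_le u (-starRingEnd ℂ v)

theorem norm_add_conj_le_of_forall_norm_sub_one_le (hβ : β < 1) (hz : ‖z‖ < 1) (hz0 : z ≠ 0)
    (hrot : ∀ ε : ℂ, ‖ε‖ = 1 →
      ‖u / z + ε * (v / z) - 1‖ ≤ ‖z‖ * ‖u / z + ε * (v / z) + ↑(1 - 2 * β)‖) :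
    ‖u + starRingEnd ℂ v‖ ≤ β * ‖z‖ + (1 - β) * ‖z‖ * (1 + ‖z‖) / (1 - ‖z‖) := by
  have hup := mul_norm_add_norm_le (norm_nonneg z) hz (by linarith) hrot
  have hz' : 0 < 1 - ‖z‖ := sub_pos.mpr hz
  have hnorm (w : ℂ) : ‖w‖ = ‖z‖ * ‖w / z‖ := by
    rw [norm_div, mul_div_cancel₀ _ (norm_ne_zero_iff.mpr hz0)]
  calc ‖u + starRingEnd ℂ v‖ ≤ ‖u‖ + ‖starRingEnd ℂ v‖ := norm_add_le _ _
    _ = ‖z‖ * (‖u / z‖ + ‖v / z‖) := by rw [norm_conj, hnorm u, hnorm v]; ring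
    _ ≤ ‖z‖ * ((1 + ‖z‖ * (1 - 2 * β)) / (1 - ‖z‖)) := by gcongr; rwa [le_div_iff₀' hz']
    _ = β * ‖z‖ + (1 - β) * ‖z‖ * (1 + ‖z‖) / (1 - ‖z‖) := by field_simp [hz'.ne']; ring

end Growth

section HarmonicClass

variable {β : ℝ} {h g : ℂ → ℂ} {a b : ℕ → ℂ}

theorem lt_re_add_mul_of_norm_lt {p q ε : ℂ} (hε : ‖ε‖ = 1) (hpq : ‖q‖ < (p - β).re) :
    β < (p + ε * q).re := by
  have := neg_le_of_abs_le (abs_re_le_norm (ε * q))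
  rw [norm_mul, hε, one_mul] at this
  rw [sub_re, ofReal_re] at hpq
  rw [add_re]
  linarith

theorem norm_div_add_mul_div_sub_one_le (hβ : β < 1) (ha0 : a 0 = 0) (ha1 : a 1 = 1)
    (hb0 : b 0 = 0) (hb1 : b 1 = 0)
    (hh : ∀ z ∈ ball (0 : ℂ) 1, HasSum (fun n => a n * z ^ n) (h z))
    (hg : ∀ z ∈ ball (0 : ℂ) 1, HasSum (fun n => b n * z ^ n) (g z))
    (hmem : ∀ z ∈ ball (0 : ℂ) 1, z ≠ 0 → ‖g z / z‖ < (h z / z - β).re)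
    {z : ℂ} (hz : z ∈ ball (0 : ℂ) 1) (hz0 : z ≠ 0) {ε : ℂ} (hε : ‖ε‖ = 1) :
    ‖h z / z + ε * (g z / z) - 1‖ ≤ ‖z‖ * ‖h z / z + ε * (g z / z) + ↑(1 - 2 * β)‖ := by
  have hdiv (w : ℂ) : (h w + ε * g w) / w = h w / w + ε * (g w / w) := by ring
  have hsum (w : ℂ) (hw : w ∈ ball (0 : ℂ) 1) :
      HasSum (fun n => (a n + ε * b n) * w ^ n) (h w + ε * g w) := by
    simpa only [add_mul, mul_assoc] using (hh w hw).add ((hg w hw).mul_left ε)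
  simpa only [hdiv] using norm_div_sub_one_le_of_lt_re_div hβ (by simp [ha0, hb0])
    (by simp [ha1, hb1]) hsum
    (fun w hw hw0 => hdiv w ▸ lt_re_add_mul_of_norm_lt hε (hmem w hw hw0)) hz hz0

end HarmonicClass

theorem stmt_0_general
    (β : ℝ) (hβ1 : β < 1)
    (h g : ℂ → ℂ) (a b : ℕ → ℂ)
    (ha0 : a 0 = 0) (ha1 : a 1 = 1) (hb0 : b 0 = 0) (hb1 : b 1 = 0)
    (hh : ∀ z ∈ Metric.ball (0:ℂ) 1, HasSum (fun n : ℕ => a n * z ^ n) (h z))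
    (hg : ∀ z ∈ Metric.ball (0:ℂ) 1, HasSum (fun n : ℕ => b n * z ^ n) (g z))
    (hmem : ∀ z ∈ Metric.ball (0:ℂ) 1, z ≠ 0 →
      ‖g z / z‖ < (h z / z - (β:ℂ)).re) :
    ∀ z ∈ Metric.ball (0:ℂ) 1,
      β * ‖z‖ +
          (1 - β) * ‖z‖ * (1 - ‖z‖) / (1 + ‖z‖)
        ≤ ‖h z + (starRingEnd ℂ) (g z)‖ ∧
      ‖h z + (starRingEnd ℂ) (g z)‖
        ≤ β * ‖z‖ +
            (1 - β) * ‖z‖ * (1 + ‖z‖) / (1 - ‖z‖) := by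
  intro z hz
  obtain rfl | hz0 := eq_or_ne z 0
  · simp [apply_zero_of_hasSum hh, apply_zero_of_hasSum hg, ha0, hb0]
  have hrot (ε : ℂ) (hε : ‖ε‖ = 1) :=
    norm_div_add_mul_div_sub_one_le hβ1 ha0 ha1 hb0 hb1 hh hg hmem hz hz0 hε
  have hr : ‖z‖ < 1 := mem_ball_zero_iff.mp hz
  exact ⟨le_norm_add_conj_of_forall_norm_sub_one_le hβ1 hr hz0 hrot,
    norm_add_conj_le_of_forall_norm_sub_one_le hβ1 hr hz0 hrot⟩

theorem stmt_0
    (β : ℝ) (hβ0 : 0 ≤ β) (hβ1 : β < 1)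
    (h g : ℂ → ℂ) (a b : ℕ → ℂ)
    (ha0 : a 0 = 0) (ha1 : a 1 = 1) (hb0 : b 0 = 0) (hb1 : b 1 = 0)
    (hh : ∀ z ∈ Metric.ball (0:ℂ) 1, HasSum (fun n : ℕ => a n * z ^ n) (h z))
    (hg : ∀ z ∈ Metric.ball (0:ℂ) 1, HasSum (fun n : ℕ => b n * z ^ n) (g z))
    (hmem : ∀ z ∈ Metric.ball (0:ℂ) 1, z ≠ 0 →
      ‖g z / z‖ < (h z / z - (β:ℂ)).re) :
    ∀ z ∈ Metric.ball (0:ℂ) 1,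
      β * ‖z‖ +
          (1 - β) * ‖z‖ * (1 - ‖z‖) / (1 + ‖z‖)
        ≤ ‖h z + (starRingEnd ℂ) (g z)‖ ∧
      ‖h z + (starRingEnd ℂ) (g z)‖
        ≤ β * ‖z‖ +
            (1 - β) * ‖z‖ * (1 + ‖z‖) / (1 - ‖z‖) :=
  stmt_0_general β hβ1 h g a b ha0 ha1 hb0 hb1 hh hg hmem
end

section
/- Let 0 ≤ β < 1 and define f(z) = z + 2(1−β) Σ_{n≥2} z^n = z + 2(1−β) z²/(1−z) (so g ≡ 0). Then f ∈ G̃⁰_H(β), and for every real r with 0 < r < 1 one has |f(r)| = β·r + (1−β)·r·(1+r)/(1−r); that is, the upper growth bound for the class G̃⁰_H(β) is attained by f. -/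
/-!
With `g ≡ 0` the class condition reads `Re (f z / z - β) > 0`, and
`f z / z - β = (1 - β) (1 + z) / (1 - z)` is a positive multiple of the Cayley transform of `z`,
whose real part `(1 - |z|²) / |1 - z|²` is positive on the disk. On the positive axis every
coefficient of `f` is positive, so `|f r| = f r`, which is the bound.
-/

open Complex

lemma hasSum_mul_pow_add_two {K : Type*} [NormedField K] (c : K) {z : K} (hz : ‖z‖ < 1) :
    HasSum (fun n : ℕ => c * z ^ (n + 2)) (c * z ^ 2 / (1 - z)) := by
  have hterm : (fun n : ℕ => c * z ^ (n + 2)) = fun n => c * z ^ 2 * z ^ n :=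
    funext fun n => by ring
  rw [hterm, div_eq_mul_inv]
  exact (hasSum_geometric_of_norm_lt_one hz).mul_left _

lemma re_one_add_div_one_sub (z : ℂ) :
    ((1 + z) / (1 - z)).re = (1 - ‖z‖ ^ 2) / ‖1 - z‖ ^ 2 := by
  rw [div_re, normSq_eq_norm_sq, ← add_div, ← normSq_eq_norm_sq z, normSq_apply]
  congr 1
  simp only [add_re, sub_re, add_im, sub_im, one_re, one_im]
  ring

lemma re_one_add_div_one_sub_pos {z : ℂ} (hz : ‖z‖ < 1) : 0 < ((1 + z) / (1 - z)).re := by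
  have hz1 : 1 - z ≠ 0 := sub_ne_zero.mpr (by rintro rfl; simp at hz)
  rw [re_one_add_div_one_sub]
  have : ‖z‖ ^ 2 < 1 := by nlinarith [norm_nonneg z]
  exact div_pos (by linarith) (by positivity)

theorem stmt_1_general
    (β : ℝ) (hβ1 : β < 1)
    (f : ℂ → ℂ) (hf : ∀ z : ℂ, f z = z + 2 * (1 - (β:ℂ)) * z ^ 2 / (1 - z)) :
    (∀ z ∈ Metric.ball (0:ℂ) 1,
      HasSum (fun n : ℕ => 2 * (1 - (β:ℂ)) * z ^ (n + 2)) (f z - z)) ∧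
    (∀ z ∈ Metric.ball (0:ℂ) 1, z ≠ 0 →
      ‖(0:ℂ) / z‖ < (f z / z - (β:ℂ)).re) ∧
    (∀ r : ℝ, 0 < r → r < 1 →
      ‖f (r:ℂ)‖ = β * r + (1 - β) * r * (1 + r) / (1 - r)) := by
  refine ⟨fun z hz => ?_, fun z hz _ => ?_, fun r hr0 hr1 => ?_⟩
  · rw [hf, add_sub_cancel_left]
    exact hasSum_mul_pow_add_two _ (mem_ball_zero_iff.mp hz)
  · have hz : ‖z‖ < 1 := mem_ball_zero_iff.mp hz
    have hz1 : 1 - z ≠ 0 := sub_ne_zero.mpr (by rintro rfl; simp at hz)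
    have hcayley : f z / z - β = ((1 - β : ℝ) : ℂ) * ((1 + z) / (1 - z)) := by
      rw [hf]; push_cast; field_simp; ring
    rw [zero_div, norm_zero, hcayley, re_ofReal_mul]
    exact mul_pos (by linarith) (re_one_add_div_one_sub_pos hz)
  · have h1r : 0 < 1 - r := by linarith
    have hreal : f r = ((r + 2 * (1 - β) * r ^ 2 / (1 - r) : ℝ) : ℂ) := by
      rw [hf]; push_cast; rfl
    have hpos : 0 < r + 2 * (1 - β) * r ^ 2 / (1 - r) :=
      add_pos_of_pos_of_nonneg hr0 (div_nonneg (by nlinarith) h1r.le)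
    rw [hreal, norm_real, Real.norm_of_nonneg hpos.le]
    field_simp
    ring

theorem stmt_1
    (β : ℝ) (hβ0 : 0 ≤ β) (hβ1 : β < 1)
    (f : ℂ → ℂ) (hf : ∀ z : ℂ, f z = z + 2 * (1 - (β:ℂ)) * z ^ 2 / (1 - z)) :
    (∀ z ∈ Metric.ball (0:ℂ) 1,
      HasSum (fun n : ℕ => 2 * (1 - (β:ℂ)) * z ^ (n + 2)) (f z - z)) ∧
    (∀ z ∈ Metric.ball (0:ℂ) 1, z ≠ 0 →
      ‖(0:ℂ) / z‖ < (f z / z - (β:ℂ)).re) ∧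
    (∀ r : ℝ, 0 < r → r < 1 →
      ‖f (r:ℂ)‖ = β * r + (1 - β) * r * (1 + r) / (1 - r)) :=
  stmt_1_general β hβ1 f hf
end

section
/- Let 0 ≤ β < 1 and let f = h + conj(g) ∈ G̃⁰_H(β), with coefficients a_n, b_n (n ≥ 2). Then for every n ≥ 2, |a_n| + |b_n| ≤ 2(1−β). -/
/-!
Pick a unimodular `ε` with `|a_n + ε b_n| = |a_n| + |b_n|`. Then
`p(z) = h(z)/z + ε g(z)/z - β = (1 - β) + Σ_{m ≥ 1} (a_{m+1} + ε b_{m+1}) z^m` has nonnegative real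
part on the punctured disk, because `|ε g(z)/z| = |g(z)/z| < Re (h(z)/z - β)`. Carathéodory's
lemma `|c_k| ≤ 2 Re c_0` for such a series comes from the Fourier coefficients of `Re p` on the
circle `|z| = r`: the `k`-th one is `π c_k r^k` and the mean is `2π Re c_0`, so positivity of
`Re p` gives `π |c_k| r^k ≤ 2π Re c_0`, and `r → 1`.
-/

open Real Complex Filter Topology ComplexConjugate

theorem integral_exp_int_mul_mul_I (m : ℤ) :
    ∫ θ in (0 : ℝ)..2 * π, exp (m * θ * I) = if m = 0 then (2 * π : ℂ) else 0 := by
  split_ifs with hm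
  · simp [hm]
  · have hmI : (m : ℂ) * I ≠ 0 := by simp [hm]
    simp_rw [mul_right_comm _ _ I]
    rw [integral_exp_mul_complex hmI, div_eq_zero_iff, sub_eq_zero]
    left
    push_cast
    rw [mul_zero, Complex.exp_zero, mul_assoc, mul_comm I, exp_int_mul_two_pi_mul_I]

theorem integral_re_mul_exp_mul_exp_neg (w : ℂ) (n k : ℕ) :
    ∫ θ in (0 : ℝ)..2 * π, ((w * exp (n * θ * I)).re : ℂ) * exp (-(k * θ * I)) =
      if n = k then (if k = 0 then (2 * π * w.re : ℂ) else π * w) else 0 := by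
  have hexpand : ∀ θ : ℝ, ((w * exp (n * θ * I)).re : ℂ) * exp (-(k * θ * I)) =
      w / 2 * exp (((n - k : ℤ) : ℂ) * θ * I) +
        conj w / 2 * exp (((-(n + k) : ℤ) : ℂ) * θ * I) := by
    intro θ
    rw [re_eq_add_conj, map_mul, ← exp_conj]
    simp only [map_mul, conj_ofReal, conj_natCast, conj_I]
    push_cast
    simp only [sub_mul, add_mul, neg_mul, mul_neg, Complex.exp_sub, Complex.exp_add,
      Complex.exp_neg]
    field_simp
  simp_rw [hexpand]
  rw [intervalIntegral.integral_add (Continuous.intervalIntegrable (by fun_prop) _ _)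
    (Continuous.intervalIntegrable (by fun_prop) _ _), intervalIntegral.integral_const_mul,
    intervalIntegral.integral_const_mul, integral_exp_int_mul_mul_I, integral_exp_int_mul_mul_I]
  split_ifs <;> first | omega | (rw [re_eq_add_conj]; ring) | ring

theorem summable_norm_mul_pow_of_summable {𝕜 : Type*} [NormedDivisionRing 𝕜] {c : ℕ → 𝕜}
    {w : 𝕜} (hs : Summable fun n => c n * w ^ n) {r : ℝ} (hr0 : 0 ≤ r) (hr : r < ‖w‖) :
    Summable fun n => ‖c n‖ * r ^ n := by
  obtain ⟨C, hC⟩ := hs.tendsto_atTop_zero.norm.bddAbove_range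
  have hw : 0 < ‖w‖ := hr0.trans_lt hr
  refine .of_nonneg_of_le (fun n => by positivity) (fun n => ?_)
    ((summable_geometric_of_lt_one (by positivity) ((div_lt_one hw).2 hr)).mul_left C)
  calc ‖c n‖ * r ^ n = ‖c n * w ^ n‖ * (r / ‖w‖) ^ n := by
        rw [norm_mul, norm_pow, div_pow, mul_assoc, mul_div_cancel₀ _ (by positivity)]
    _ ≤ C * (r / ‖w‖) ^ n := by gcongr; exact hC ⟨n, rfl⟩

theorem hasSum_integral_re_comp_circleMap_mul_exp_neg {c : ℕ → ℂ} {F : ℂ → ℂ} {r : ℝ}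
    (hr0 : 0 ≤ r) (hc : Summable fun n => ‖c n‖ * r ^ n)
    (hF : ∀ θ : ℝ, HasSum (fun n => c n * circleMap 0 r θ ^ n) (F (circleMap 0 r θ))) (k : ℕ) :
    HasSum (fun n => ∫ θ in (0 : ℝ)..2 * π,
        ((c n * circleMap 0 r θ ^ n).re : ℂ) * exp (-(k * θ * I)))
      (∫ θ in (0 : ℝ)..2 * π, ((F (circleMap 0 r θ)).re : ℂ) * exp (-(k * θ * I))) := by
  refine intervalIntegral.hasSum_integral_of_dominated_convergence (fun n _ => ‖c n‖ * r ^ n)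
    (fun n => (Continuous.aestronglyMeasurable (by fun_prop))) (fun n => ?_)
    (.of_forall fun θ _ => hc) intervalIntegrable_const
    (.of_forall fun θ _ => (hasSum_ofReal.2 (hasSum_re (hF θ))).mul_right _)
  refine .of_forall fun θ _ => ?_
  calc ‖((c n * circleMap 0 r θ ^ n).re : ℂ) * exp (-(k * θ * I))‖
      = |(c n * circleMap 0 r θ ^ n).re| := by
        rw [norm_mul, norm_real, Real.norm_eq_abs, norm_exp]; simp
    _ ≤ ‖c n * circleMap 0 r θ ^ n‖ := abs_re_le_norm _
    _ = ‖c n‖ * r ^ n := by rw [norm_mul, norm_pow, norm_circleMap_zero, abs_of_nonneg hr0]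

theorem integral_re_comp_circleMap_mul_exp_neg {c : ℕ → ℂ} {F : ℂ → ℂ} {r : ℝ} (hr0 : 0 ≤ r)
    (hc : Summable fun n => ‖c n‖ * r ^ n)
    (hF : ∀ θ : ℝ, HasSum (fun n => c n * circleMap 0 r θ ^ n) (F (circleMap 0 r θ))) (k : ℕ) :
    ∫ θ in (0 : ℝ)..2 * π, ((F (circleMap 0 r θ)).re : ℂ) * exp (-(k * θ * I)) =
      if k = 0 then (2 * π * (c 0).re : ℂ) else π * c k * r ^ k := by
  refine (hasSum_integral_re_comp_circleMap_mul_exp_neg hr0 hc hF k).unique ?_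
  have hterm : ∀ n, ∫ θ in (0 : ℝ)..2 * π,
      ((c n * circleMap 0 r θ ^ n).re : ℂ) * exp (-(k * θ * I)) =
        if n = k then (if k = 0 then (2 * π * (c 0).re : ℂ) else π * c k * r ^ k) else 0 := by
    intro n
    simp_rw [circleMap_zero_pow, circleMap_zero, ← mul_assoc]
    push_cast
    rw [integral_re_mul_exp_mul_exp_neg]
    split_ifs <;> subst_vars
    · simp
    · ring
    · rfl
  simp_rw [hterm]
  exact hasSum_ite_eq k _

theorem norm_mul_pow_le_two_mul_re_of_re_nonneg {c : ℕ → ℂ} {F : ℂ → ℂ} {r : ℝ} (hr0 : 0 ≤ r)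
    (hc : Summable fun n => ‖c n‖ * r ^ n)
    (hF : ∀ θ : ℝ, HasSum (fun n => c n * circleMap 0 r θ ^ n) (F (circleMap 0 r θ)))
    (hre : ∀ θ : ℝ, 0 ≤ (F (circleMap 0 r θ)).re) {k : ℕ} (hk : k ≠ 0) :
    ‖c k‖ * r ^ k ≤ 2 * (c 0).re := by
  have hcoeff := integral_re_comp_circleMap_mul_exp_neg hr0 hc hF k
  rw [if_neg hk] at hcoeff
  have hmean : ∫ θ in (0 : ℝ)..2 * π, (F (circleMap 0 r θ)).re = 2 * π * (c 0).re := by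
    have h0 := integral_re_comp_circleMap_mul_exp_neg hr0 hc hF 0
    simp only [CharP.cast_eq_zero, zero_mul, neg_zero, Complex.exp_zero, mul_one, if_true,
      intervalIntegral.integral_ofReal] at h0
    exact_mod_cast h0
  refine le_of_mul_le_mul_left ?_ pi_pos
  calc π * (‖c k‖ * r ^ k)
      = ‖∫ θ in (0 : ℝ)..2 * π, ((F (circleMap 0 r θ)).re : ℂ) * exp (-(k * θ * I))‖ := by
        rw [hcoeff, norm_mul, norm_mul, norm_real, norm_pow, norm_real, Real.norm_of_nonneg hr0,
          Real.norm_of_nonneg pi_pos.le, mul_assoc]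
    _ ≤ ∫ θ in (0 : ℝ)..2 * π, ‖((F (circleMap 0 r θ)).re : ℂ) * exp (-(k * θ * I))‖ :=
        intervalIntegral.norm_integral_le_integral_norm two_pi_pos.le
    _ = ∫ θ in (0 : ℝ)..2 * π, (F (circleMap 0 r θ)).re := by
        congr 1; ext θ
        rw [norm_mul, norm_real, Real.norm_of_nonneg (hre θ), norm_exp]
        simp
    _ = π * (2 * (c 0).re) := by rw [hmean]; ring

theorem norm_coeff_le_two_mul_re_coeff_zero {c : ℕ → ℂ} {F : ℂ → ℂ}
    (hF : ∀ z : ℂ, ‖z‖ < 1 → z ≠ 0 → HasSum (fun n => c n * z ^ n) (F z))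
    (hre : ∀ z : ℂ, ‖z‖ < 1 → z ≠ 0 → 0 ≤ (F z).re) {k : ℕ} (hk : k ≠ 0) :
    ‖c k‖ ≤ 2 * (c 0).re := by
  have hr : ∀ r ∈ Set.Ioo (0 : ℝ) 1, ‖c k‖ * r ^ k ≤ 2 * (c 0).re := by
    rintro r ⟨hr0, hr1⟩
    have hmem : ∀ θ : ℝ, ‖circleMap 0 r θ‖ < 1 ∧ circleMap 0 r θ ≠ 0 := fun θ =>
      ⟨by rwa [norm_circleMap_zero, abs_of_pos hr0], circleMap_ne_center hr0.ne'⟩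
    have hw : ‖(((1 + r) / 2 : ℝ) : ℂ)‖ < 1 := by
      rw [norm_real, Real.norm_of_nonneg (by positivity)]; linarith
    have hc : Summable fun n => ‖c n‖ * r ^ n :=
      summable_norm_mul_pow_of_summable (hF _ hw (by norm_cast; positivity)).summable hr0.le
        (by rw [norm_real, Real.norm_of_nonneg (by positivity)]; linarith)
    exact norm_mul_pow_le_two_mul_re_of_re_nonneg hr0.le hc
      (fun θ => hF _ (hmem θ).1 (hmem θ).2) (fun θ => hre _ (hmem θ).1 (hmem θ).2) hk
  have hlim : Tendsto (fun r : ℝ => ‖c k‖ * r ^ k) (𝓝[<] 1) (𝓝 (‖c k‖ * 1 ^ k)) :=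
    (Continuous.tendsto (by fun_prop) 1).mono_left nhdsWithin_le_nhds
  simpa using le_of_tendsto hlim
    (eventually_of_mem (Ioo_mem_nhdsLT zero_lt_one) hr)

theorem exists_norm_eq_one_norm_add_mul_eq (u v : ℂ) :
    ∃ ε : ℂ, ‖ε‖ = 1 ∧ ‖u + ε * v‖ = ‖u‖ + ‖v‖ := by
  refine ⟨exp ((arg u - arg v : ℝ) * I), norm_exp_ofReal_mul_I _, ?_⟩
  have hrot : exp ((arg u - arg v : ℝ) * I) * exp (arg v * I) = exp (arg u * I) := by
    rw [← Complex.exp_add]; push_cast; ring_nf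
  have hpolar :
      u + exp ((arg u - arg v : ℝ) * I) * v = ((‖u‖ + ‖v‖ : ℝ) : ℂ) * exp (arg u * I) :=
    calc u + exp ((arg u - arg v : ℝ) * I) * v
        = ‖u‖ * exp (arg u * I) + exp ((arg u - arg v : ℝ) * I) * (‖v‖ * exp (arg v * I)) := by
          rw [norm_mul_exp_arg_mul_I, norm_mul_exp_arg_mul_I]
      _ = ((‖u‖ + ‖v‖ : ℝ) : ℂ) * exp (arg u * I) := by
          rw [mul_left_comm, hrot]; push_cast; ring
  rw [hpolar, norm_mul, norm_exp_ofReal_mul_I, norm_real, Real.norm_of_nonneg (by positivity),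
    mul_one]

theorem HasSum.coeff_succ_mul_pow {𝕜 : Type*} [NormedField 𝕜] {a : ℕ → 𝕜} {z s : 𝕜}
    (hs : HasSum (fun n => a n * z ^ n) s) (ha0 : a 0 = 0) (hz : z ≠ 0) :
    HasSum (fun n => a (n + 1) * z ^ n) (s / z) := by
  have hshift := (hasSum_nat_add_iff' 1).mpr hs
  simp only [Finset.range_one, Finset.sum_singleton, ha0, zero_mul, sub_zero] at hshift
  convert hshift.div_const z using 1
  ext n
  rw [pow_succ, ← mul_assoc, mul_div_cancel_right₀ _ hz]

theorem stmt_2_general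
    (β : ℝ)
    (h g : ℂ → ℂ) (a b : ℕ → ℂ)
    (ha0 : a 0 = 0) (ha1 : a 1 = 1) (hb0 : b 0 = 0) (hb1 : b 1 = 0)
    (hh : ∀ z ∈ Metric.ball (0:ℂ) 1, HasSum (fun n : ℕ => a n * z ^ n) (h z))
    (hg : ∀ z ∈ Metric.ball (0:ℂ) 1, HasSum (fun n : ℕ => b n * z ^ n) (g z))
    (hmem : ∀ z ∈ Metric.ball (0:ℂ) 1, z ≠ 0 →
      ‖g z / z‖ < (h z / z - (β:ℂ)).re) :
    ∀ n : ℕ, 2 ≤ n → ‖a n‖ + ‖b n‖ ≤ 2 * (1 - β) := by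
  intro n hn
  obtain ⟨ε, hε, hε_add⟩ := exists_norm_eq_one_norm_add_mul_eq (a n) (b n)
  set c : ℕ → ℂ := fun m => a (m + 1) + ε * b (m + 1) - if m = 0 then (β : ℂ) else 0
  have hsum : ∀ z : ℂ, ‖z‖ < 1 → z ≠ 0 →
      HasSum (fun m => c m * z ^ m) (h z / z + ε * (g z / z) - β) := by
    intro z hz hz0
    have hz' : z ∈ Metric.ball (0 : ℂ) 1 := mem_ball_zero_iff.2 hz
    refine ((((hh z hz').coeff_succ_mul_pow ha0 hz0).add
      (((hg z hz').coeff_succ_mul_pow hb0 hz0).mul_left ε)).sub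
        (hasSum_ite_eq 0 (β : ℂ))).congr_fun fun m => ?_
    rcases eq_or_ne m 0 with rfl | hm
    · simp [c]
    · simp [c, hm]
      ring
  have hre : ∀ z : ℂ, ‖z‖ < 1 → z ≠ 0 → 0 ≤ (h z / z + ε * (g z / z) - β).re := by
    intro z hz hz0
    have hrot : -‖g z / z‖ ≤ (ε * (g z / z)).re := by
      simpa [hε] using neg_le_of_abs_le (abs_re_le_norm (ε * (g z / z)))
    have hlt := hmem z (mem_ball_zero_iff.2 hz) hz0
    simp only [sub_re, add_re, ofReal_re] at hlt ⊢
    linarith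
  have hcoeff := norm_coeff_le_two_mul_re_coeff_zero hsum hre (k := n - 1) (by omega)
  simpa [c, ha1, hb1, Nat.sub_add_cancel (by omega : 1 ≤ n), hε_add,
    if_neg (by omega : n - 1 ≠ 0)] using hcoeff

theorem stmt_2
    (β : ℝ) (hβ0 : 0 ≤ β) (hβ1 : β < 1)
    (h g : ℂ → ℂ) (a b : ℕ → ℂ)
    (ha0 : a 0 = 0) (ha1 : a 1 = 1) (hb0 : b 0 = 0) (hb1 : b 1 = 0)
    (hh : ∀ z ∈ Metric.ball (0:ℂ) 1, HasSum (fun n : ℕ => a n * z ^ n) (h z))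
    (hg : ∀ z ∈ Metric.ball (0:ℂ) 1, HasSum (fun n : ℕ => b n * z ^ n) (g z))
    (hmem : ∀ z ∈ Metric.ball (0:ℂ) 1, z ≠ 0 →
      ‖g z / z‖ < (h z / z - (β:ℂ)).re) :
    ∀ n : ℕ, 2 ≤ n → ‖a n‖ + ‖b n‖ ≤ 2 * (1 - β) :=
  stmt_2_general β h g a b ha0 ha1 hb0 hb1 hh hg hmem
end
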